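/- Let M > 0 and 0 < T < 1/(4M). Let α : [0,T] → [0,∞) be continuous with α(0) ≤ 1 and α(t) ≤ 1 + t·M·α(t)² for all t ∈ [0,T]. Then α(t) ≤ 2/(1 + √(1 − 4tM)) for all t ∈ [0,T]; in particular α(t) < 2 for all t ∈ [0,T]. -/

import Mathlib

/-!
On `[0, T]` the inequality `a ≤ 1 + c a²` with `c = tM < 1/4` forbids the value `a = 2`
(it would force `1 ≤ 4c`), so by continuity and `α 0 ≤ 1` the function `α` stays below `2`.
Writing `s = √(1 - 4c)`, the quadratic factors as
`c a² - a + 1 = ((1 + s) a / 2 - 1) ((1 - s) a / 2 - 1)`, and for `a < 2` the second factor is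
negative, so the first one is not positive: `a ≤ 2 / (1 + s)`.
-/

open Set

theorem IsPreconnected.forall_lt_of_forall_ne {X α : Type*} [TopologicalSpace X] [LinearOrder α]
    [TopologicalSpace α] [OrderClosedTopology α] {s : Set X} (hs : IsPreconnected s) {f : X → α}
    (hf : ContinuousOn f s) {x : X} (hx : x ∈ s) {y : α} (hxy : f x < y)
    (hne : ∀ z ∈ s, f z ≠ y) : ∀ z ∈ s, f z < y := by
  intro z hz
  by_contra! hyz
  obtain ⟨w, hw, hwy⟩ := hs.intermediate_value hx hz hf ⟨hxy.le, hyz⟩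
  exact hne w hw hwy

theorem le_two_div_one_add_sqrt_of_le_one_add_mul_sq {a c : ℝ} (hc0 : 0 ≤ c) (hc : 4 * c ≤ 1)
    (ha2 : a < 2) (ha : a ≤ 1 + c * a ^ 2) : a ≤ 2 / (1 + √(1 - 4 * c)) := by
  set s := √(1 - 4 * c)
  have hs0 : 0 ≤ s := Real.sqrt_nonneg _
  have hs1 : s ≤ 1 := Real.sqrt_le_one.mpr (by linarith)
  have hsq : s ^ 2 = 1 - 4 * c := Real.sq_sqrt (by linarith)
  have hfactor : 0 ≤ ((1 + s) * a / 2 - 1) * ((1 - s) * a / 2 - 1) := by nlinarith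
  have hneg : (1 - s) * a / 2 - 1 < 0 := by
    nlinarith [mul_nonneg (sub_nonneg.2 hs1) (sub_pos.2 ha2).le]
  rw [le_div_iff₀ (by positivity)]
  nlinarith

theorem continuous_quadratic_bound_general
    (M T : ℝ) (hM : 0 < M) (hT : T < 1 / (4 * M))
    (α : ℝ → ℝ) (hαcont : ContinuousOn α (Icc 0 T))
    (hα0 : α 0 ≤ 1)
    (hαineq : ∀ t ∈ Icc (0:ℝ) T, α t ≤ 1 + t * M * (α t) ^ 2) :
    ∀ t ∈ Icc (0:ℝ) T,
      α t ≤ 2 / (1 + Real.sqrt (1 - 4 * t * M)) ∧ α t < 2 := by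
  have hquarter : ∀ t ∈ Icc (0:ℝ) T, 4 * (t * M) < 1 := by
    rintro t ⟨-, htT⟩
    rw [lt_div_iff₀ (by positivity)] at hT
    nlinarith
  have hne_two : ∀ t ∈ Icc (0:ℝ) T, α t ≠ 2 := by
    intro t ht h
    have hineq := hαineq t ht
    rw [h] at hineq
    linarith [hquarter t ht]
  intro t ht
  have hlt_two : α t < 2 :=
    isPreconnected_Icc.forall_lt_of_forall_ne hαcont ⟨le_rfl, ht.1.trans ht.2⟩
      (by linarith) hne_two t ht
  refine ⟨?_, hlt_two⟩
  rw [mul_assoc]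
  exact le_two_div_one_add_sqrt_of_le_one_add_mul_sq (mul_nonneg ht.1 hM.le)
    (hquarter t ht).le hlt_two (hαineq t ht)

/-- If `α : [0,T] → [0,∞)` is continuous with `α 0 ≤ 1` and satisfies
`α t ≤ 1 + t·M·(α t)²` on `[0,T]` where `0 < T < 1/(4M)`, then
`α t ≤ 2/(1 + √(1 - 4tM))` on `[0,T]`; in particular `α t < 2` on `[0,T]`. -/
theorem continuous_quadratic_bound
    (M T : ℝ) (hM : 0 < M) (hT0 : 0 < T) (hT : T < 1 / (4 * M))
    (α : ℝ → ℝ) (hαcont : ContinuousOn α (Icc 0 T))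
    (hαnonneg : ∀ t ∈ Icc (0:ℝ) T, 0 ≤ α t)
    (hα0 : α 0 ≤ 1)
    (hαineq : ∀ t ∈ Icc (0:ℝ) T, α t ≤ 1 + t * M * (α t) ^ 2) :
    ∀ t ∈ Icc (0:ℝ) T,
      α t ≤ 2 / (1 + Real.sqrt (1 - 4 * t * M)) ∧ α t < 2 :=
  continuous_quadratic_bound_general M T hM hT α hαcont hα0 hαineq
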